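/- Let X, Y be two independent copies of a Markov process on ℕ with common transition kernel p_t and invariant distribution μ, satisfying the uniform bound ‖p_t(x,·) − μ‖_TV ≤ e^{−t/ξ₁} for all x. Then for any t > 0, any α ∈ (0,1), and h_α(t) = sup{x : μ(x) ≥ α^{-1} e^{−t/ξ₁}}, the meeting probability satisfies P_{(x,y)}(X_t = Y_t) ≥ (1−α)² ∑_{z ≤ h_α(t)} μ(z)². -/

import Mathlib

/-!
Mixing in total variation controls each point mass from below: since `p_t(w,·)` and `μ` have the
same total mass, `μ z - p_t(w,z)` is at most half their `ℓ¹` distance, hence at most `e^{-t/ξ₁}`.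
For `z ≤ h` this error is at most `α μ z`, so `p_t(w,z) ≥ (1-α) μ z` for every starting point
`w`. Multiplying the bounds for `w = x` and `w = y` and discarding the terms `z > h` of the
meeting probability `∑_z p_t(x,z) p_t(y,z)` gives the claim.
-/

section

variable {ι : Type*} {f g : ι → ℝ}

theorem sub_le_half_tsum_abs_sub_of_hasSum_eq {a : ℝ} (hf : HasSum f a) (hg : HasSum g a)
    (i : ι) : g i - f i ≤ (1 / 2) * ∑' j, |f j - g j| := by
  have hd : HasSum (fun j => f j - g j) 0 := by simpa using hf.sub hg
  -- `(|d| - d) / 2` is the negative part of `d = f - g`; its sum is half the `ℓ¹` norm of `d`.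
  have hneg := (hd.summable.abs.hasSum.sub hd).div_const 2
  calc g i - f i ≤ (|f i - g i| - (f i - g i)) / 2 := by linarith [neg_abs_le (f i - g i)]
    _ ≤ (∑' j, |f j - g j| - 0) / 2 :=
      le_hasSum hneg i fun j _ => by linarith [le_abs_self (f j - g j)]
    _ = (1 / 2) * ∑' j, |f j - g j| := by ring

theorem summable_mul_of_hasSum_one (hf : HasSum f 1) (hf0 : ∀ i, 0 ≤ f i) (hg : Summable g)
    (hg0 : ∀ i, 0 ≤ g i) : Summable fun i => f i * g i :=
  hg.of_nonneg_of_le (fun i => mul_nonneg (hf0 i) (hg0 i)) fun i =>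
    mul_le_of_le_one_left (hg0 i) (le_hasSum hf i fun j _ => hf0 j)

end

theorem stmt_12_general (ξ₁ : ℝ)
    (p : ℝ → ℕ → ℕ → ℝ) (hp_nonneg : ∀ t x z, 0 ≤ p t x z)
    (hp_prob : ∀ t x, 0 ≤ t → HasSum (p t x) 1)
    (μ : ℕ → ℝ) (hμ_prob : HasSum μ 1)
    (hTV : ∀ x : ℕ, ∀ t : ℝ, 0 ≤ t →
      (1 / 2) * ∑' z, |p t x z - μ z| ≤ Real.exp (-t / ξ₁))
    (t : ℝ) (ht : 0 < t) (α : ℝ) (hα : α ∈ Set.Ioo (0 : ℝ) 1)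
    (h : ℕ) (hh : ∀ z ≤ h, α⁻¹ * Real.exp (-t / ξ₁) ≤ μ z)
    (x y : ℕ) :
    (1 - α) ^ 2 * ∑ z ∈ Finset.range (h + 1), μ z ^ 2
      ≤ ∑' z, p t x z * p t y z := by
  obtain ⟨hα0, hα1⟩ := hα
  have hlower : ∀ w, ∀ z ≤ h, (1 - α) * μ z ≤ p t w z := by
    intro w z hz
    have hdeficit := (sub_le_half_tsum_abs_sub_of_hasSum_eq (hp_prob t w ht.le) hμ_prob z).trans
      (hTV w t ht.le)
    have hsmall := (inv_mul_le_iff₀ hα0).1 (hh z hz)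
    linarith
  have hterm : ∀ z ∈ Finset.range (h + 1), (1 - α) ^ 2 * μ z ^ 2 ≤ p t x z * p t y z := by
    intro z hz
    have hz : z ≤ h := Nat.lt_succ_iff.1 (Finset.mem_range.1 hz)
    have hμz : 0 ≤ μ z := (by positivity : 0 ≤ α⁻¹ * Real.exp (-t / ξ₁)).trans (hh z hz)
    calc (1 - α) ^ 2 * μ z ^ 2 = ((1 - α) * μ z) * ((1 - α) * μ z) := by ring
      _ ≤ p t x z * p t y z := mul_le_mul (hlower x z hz) (hlower y z hz)
          (mul_nonneg (by linarith) hμz) (hp_nonneg t x z)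
  calc (1 - α) ^ 2 * ∑ z ∈ Finset.range (h + 1), μ z ^ 2
      = ∑ z ∈ Finset.range (h + 1), (1 - α) ^ 2 * μ z ^ 2 := Finset.mul_sum _ _ _
    _ ≤ ∑ z ∈ Finset.range (h + 1), p t x z * p t y z := Finset.sum_le_sum hterm
    _ ≤ ∑' z, p t x z * p t y z :=
      (summable_mul_of_hasSum_one (hp_prob t x ht.le) (hp_nonneg t x)
        (hp_prob t y ht.le).summable (hp_nonneg t y)).sum_le_tsum _
        fun z _ => mul_nonneg (hp_nonneg t x z) (hp_nonneg t y z)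

/-- Meeting probability lower bound for two independent copies of a Markov process
with uniform mixing bound ‖p_t(x,·) − μ‖_TV ≤ e^{−t/ξ₁}: for α ∈ (0,1) and any h
with μ(z) ≥ α⁻¹e^{−t/ξ₁} for all z ≤ h (as holds for h = h_α(t)),
P_{(x,y)}(X_t = Y_t) = ∑_z p_t(x,z)p_t(y,z) ≥ (1−α)² ∑_{z≤h} μ(z)². -/
theorem stmt_12 (ξ₁ : ℝ) (hξ₁ : 0 < ξ₁)
    (p : ℝ → ℕ → ℕ → ℝ) (hp_nonneg : ∀ t x z, 0 ≤ p t x z)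
    (hp_prob : ∀ t x, 0 ≤ t → HasSum (p t x) 1)
    (μ : ℕ → ℝ) (hμ_prob : HasSum μ 1) (hμ_nonneg : ∀ z, 0 ≤ μ z)
    (hTV : ∀ x : ℕ, ∀ t : ℝ, 0 ≤ t →
      (1 / 2) * ∑' z, |p t x z - μ z| ≤ Real.exp (-t / ξ₁))
    (t : ℝ) (ht : 0 < t) (α : ℝ) (hα : α ∈ Set.Ioo (0 : ℝ) 1)
    (h : ℕ) (hh : ∀ z ≤ h, α⁻¹ * Real.exp (-t / ξ₁) ≤ μ z)
    (x y : ℕ) :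
    (1 - α) ^ 2 * ∑ z ∈ Finset.range (h + 1), μ z ^ 2
      ≤ ∑' z, p t x z * p t y z :=
  stmt_12_general ξ₁ p hp_nonneg hp_prob μ hμ_prob hTV t ht α hα h hh x y
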